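/- NESS-causation violates Interventionism: in the causal model with binary endogenous variables C, D, E, equations E = D ∨ ¬C and D = C, and a context u in which C=1, it holds that C=1 NESS-causes E=1 w.r.t. (M,u), yet there is no intervention on a subset of {D} (i.e. neither the empty intervention, nor D←0, nor D←1) under which E=1 is counterfactually dependent on C=1. -/
import Mathlib


/-!
Structural equation models (causal models) à la Pearl/Halpern, formalizing
Beckers' "The Counterfactual NESS Definition of Causation".

A causal model over a context type `Ctx` (settings of the exogenous variables),
endogenous variables `V` and values `Val` consists of finite nonempty ranges
`R X`, structural equations `F X`, and a strong-recursiveness (acyclicity)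
witness: an order `ord` such that `F X` only depends on variables of lower order.
-/

structure CausalModel (Ctx V Val : Type) where
  R : V → Finset Val
  R_nonempty : ∀ X, (R X).Nonempty
  F : V → Ctx → (V → Val) → Val
  ord : V → ℕ
  F_resp : ∀ X u s s', (∀ Y, ord Y < ord X → s Y = s' Y) → F X u s = F X u s'

namespace CausalModel

variable {Ctx V Val : Type}

/-- The unique solution of the equations in context `u` (it exists and is
unique by strong recursiveness). `(M,u) ⊨ X = x` iff `M.sol u X = x`. -/
noncomputable def sol (M : CausalModel Ctx V Val) (u : Ctx) : V → Val :=
  fun X =>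
    M.F X u (fun Y => if h : M.ord Y < M.ord X then M.sol u Y else (M.R_nonempty Y).choose)
termination_by X => M.ord X
decreasing_by exact h

/-- `M.sol u` indeed solves all the equations. -/
theorem sol_eq (M : CausalModel Ctx V Val) (u : Ctx) (X : V) :
    M.sol u X = M.F X u (M.sol u) := by
  rw [sol]
  exact M.F_resp X u _ _ (fun Y hY => dif_pos hY)

variable [DecidableEq V]

/-- `X⃗ = x⃗` (given by the set `Xs` and the assignment `xs`) is sufficient for
`E = e` w.r.t. `(M, u)`: the equation for `E` outputs `e` on every setting of the
endogenous variables (in their ranges) that agrees with `xs` on `Xs`. -/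
def Sufficient (M : CausalModel Ctx V Val) (u : Ctx) (Xs : Finset V) (xs : V → Val)
    (E : V) (e : Val) : Prop :=
  ∀ s : V → Val, (∀ Y, s Y ∈ M.R Y) → (∀ X ∈ Xs, s X = xs X) → M.F E u s = e

/-- The intervened model `M_{X⃗ ← x⃗}`: the equations of variables in `Xs` are
replaced by the constants given by `xs`. -/
def intervene (M : CausalModel Ctx V Val) (Xs : Finset V) (xs : V → Val) :
    CausalModel Ctx V Val where
  R := M.R
  R_nonempty := M.R_nonempty
  F := fun X u s => if X ∈ Xs then xs X else M.F X u s
  ord := M.ord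
  F_resp := by
    intro X u s s' h
    by_cases hX : X ∈ Xs
    · simp [hX]
    · simpa [hX] using M.F_resp X u s s' h

/-- `W⃗ = w⃗` (given by `Ws, ws`) is a witness for `C = c` directly NESS-causing
`E = e` w.r.t. `(M, u)`: `C = c` and `W⃗ = w⃗` actually hold, `{C = c} ∪ {W⃗ = w⃗}`
is sufficient for `E = e`, and `W⃗ = w⃗` alone is not. -/
def DirectNESSWith (M : CausalModel Ctx V Val) (u : Ctx) (C : V) (c : Val) (E : V) (e : Val)
    (Ws : Finset V) (ws : V → Val) : Prop :=
  M.sol u C = c ∧ (∀ W ∈ Ws, M.sol u W = ws W) ∧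
  M.Sufficient u (insert C Ws) (Function.update ws C c) E e ∧
  ¬ M.Sufficient u Ws ws E e

/-- `C = c` directly NESS-causes `E = e` w.r.t. `(M, u)`. -/
def DirectNESS (M : CausalModel Ctx V Val) (u : Ctx) (C : V) (c : Val) (E : V) (e : Val) :
    Prop :=
  ∃ (Ws : Finset V) (ws : V → Val), M.DirectNESSWith u C c E e Ws ws

/-- `C = c` NESS-causes `E = e` along the path `p = (C₁, …, Cₙ)` w.r.t. `(M, u)`:
there are values `c₁, …, cₙ` such that `C = c` directly NESS-causes `C₁ = c₁`, …,
and `Cₙ = cₙ` directly NESS-causes `E = e`. (A direct NESS-cause is a NESS-cause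
along the empty path.) -/
def NESSAlong (M : CausalModel Ctx V Val) (u : Ctx) (C : V) (c : Val) (p : List V)
    (E : V) (e : Val) : Prop :=
  ∃ cs : List Val, cs.length = p.length ∧
    List.Chain (fun a b => M.DirectNESS u a.1 a.2 b.1 b.2) (C, c) (p.zip cs ++ [(E, e)])

/-- `C = c` NESS-causes `E = e` w.r.t. `(M, u)`: there is a chain of direct
NESS-causes from `C = c` to `E = e`. -/
def NESS (M : CausalModel Ctx V Val) (u : Ctx) (C : V) (c : Val) (E : V) (e : Val) : Prop :=
  ∃ p : List V, M.NESSAlong u C c p E e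

/-- The BV definition: `C = c` NESS-causes `E = e` w.r.t. `(M, u)` and there is a
`c' ∈ R(C)` such that `C = c'` does not NESS-cause `E = e` w.r.t. `(M_{C ← c'}, u)`. -/
def BVCause (M : CausalModel Ctx V Val) (u : Ctx) (C : V) (c : Val) (E : V) (e : Val) :
    Prop :=
  M.NESS u C c E e ∧
    ∃ c' ∈ M.R C, ¬ (M.intervene {C} (fun _ => c')).NESS u C c' E e

/-- The CNESS definition: `C = c` NESS-causes `E = e` along some path `p` w.r.t.
`(M, u)` and there is a `c' ∈ R(C)` such that `C = c'` does not NESS-cause `E = e`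
along any subpath of `p` (a path all of whose variables are in `p`) w.r.t.
`(M_{C ← c'}, u)`. -/
def CNESSCause (M : CausalModel Ctx V Val) (u : Ctx) (C : V) (c : Val) (E : V) (e : Val) :
    Prop :=
  ∃ p : List V, M.NESSAlong u C c p E e ∧
    ∃ c' ∈ M.R C, ∀ p' : List V, (∀ X ∈ p', X ∈ p) →
      ¬ (M.intervene {C} (fun _ => c')).NESSAlong u C c' p' E e

/-- `E = e` is counterfactually dependent on `C = c` w.r.t. `(M, u)`:
`(M,u) ⊨ C = c ∧ E = e` and there is a `c' ∈ R(C)` with `(M,u) ⊨ [C ← c'] ¬(E = e)`. -/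
def CfDep (M : CausalModel Ctx V Val) (u : Ctx) (C : V) (c : Val) (E : V) (e : Val) : Prop :=
  M.sol u C = c ∧ M.sol u E = e ∧
    ∃ c' ∈ M.R C, (M.intervene {C} (fun _ => c')).sol u E ≠ e

/-- `E = e` is counterfactually dependent on `C = c` given the intervention
`X⃗ ← x⃗`: in `M_{X⃗ ← x⃗}` with context `u`, `C = c` and `E = e` hold, and there is
a `c' ∈ R(C)` such that additionally intervening with `C ← c'` makes `E = e` false. -/
def CfDepGiven (M : CausalModel Ctx V Val) (u : Ctx) (Xs : Finset V) (xs : V → Val)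
    (C : V) (c : Val) (E : V) (e : Val) : Prop :=
  (M.intervene Xs xs).sol u C = c ∧ (M.intervene Xs xs).sol u E = e ∧
    ∃ c' ∈ M.R C, ((M.intervene Xs xs).intervene {C} (fun _ => c')).sol u E ≠ e

/-- `Y` is a parent of `X`: the equation `F X` varies with the value of `Y`
for some context and some setting (within the ranges) of the other variables. -/
def Parent (M : CausalModel Ctx V Val) (Y X : V) : Prop :=
  ∃ (u : Ctx) (s : V → Val) (y y' : Val),
    (∀ Z, s Z ∈ M.R Z) ∧ y ∈ M.R Y ∧ y' ∈ M.R Y ∧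
    M.F X u (Function.update s Y y) ≠ M.F X u (Function.update s Y y')

end CausalModel
/-- Variables for the model with equations `E = D ∨ ¬C`, `D = C`. -/
inductive V3 | C | D | E
deriving DecidableEq

/-- The model with equations `E = D ∨ ¬C` and `D = C`, in a context where `C = 1`. -/
def M3 : CausalModel Unit V3 Bool where
  R := fun _ => Finset.univ
  R_nonempty := fun _ => Finset.univ_nonempty
  F := fun X _ s =>
    match X with
    | .C => true
    | .D => s .C
    | .E => s .D || !(s .C)
  ord := fun X => match X with | .C => 0 | .D => 1 | .E => 2
  F_resp := by
    intro X u s s' h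
    cases X
    · rfl
    · show s V3.C = s' V3.C
      exact h V3.C (by decide)
    · show (s V3.D || !(s V3.C)) = (s' V3.D || !(s' V3.C))
      rw [h V3.C (by decide), h V3.D (by decide)]

/-- NESS-causation violates Interventionism: in the model with
equations `E = D ∨ ¬C`, `D = C` and a context with `C = 1`, `C = 1` NESS-causes
`E = 1`, yet there is no intervention on a subset of `{D}` under which `E = 1` is
counterfactually dependent on `C = 1`. -/

theorem ness_violates_interventionism :
    M3.NESS () V3.C true V3.E true ∧
      ∀ (Xs : Finset V3) (xs : V3 → Bool), Xs ⊆ {V3.D} →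
        ¬ M3.CfDepGiven () Xs xs V3.C true V3.E true := by
  have hsC : M3.sol () V3.C = true := by
    rw [CausalModel.sol_eq]; rfl
  have hsD : M3.sol () V3.D = true := by
    rw [CausalModel.sol_eq]; show M3.sol () V3.C = true; exact hsC
  constructor
  · refine ⟨[V3.D], [true], rfl, ?_⟩
    refine List.Chain.cons ?_ (List.Chain.cons ?_ List.Chain.nil)
    · -- C=true directly causes D=true
      refine ⟨∅, fun _ => true, hsC, by simp, ?_, ?_⟩
      · intro s _ hs
        have := hs V3.C (by simp)
        simp [Function.update] at this
        show s V3.C = true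
        exact this
      · intro h
        have := h (fun _ => false) (by intro Y; simp [M3]) (by simp)
        simp [M3] at this
    · -- D=true directly causes E=true
      refine ⟨∅, fun _ => true, hsD, by simp, ?_, ?_⟩
      · intro s _ hs
        have := hs V3.D (by simp)
        simp [Function.update] at this
        show (s V3.D || !(s V3.C)) = true
        simp [this]
      · intro h
        have := h (fun X => match X with | V3.C => true | _ => false)
          (by intro Y; simp [M3]) (by simp)
        simp [M3] at this
  · intro Xs xs hXs hdep
    obtain ⟨h1, h2, c', _, h3⟩ := hdep
    rcases Finset.subset_singleton_iff.mp hXs with rfl | rfl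
    · -- empty intervention
      apply h3
      set M'' := (M3.intervene ∅ xs).intervene {V3.C} (fun _ => c') with hM''
      have hC : M''.sol () V3.C = c' := by
        rw [CausalModel.sol_eq]; simp [hM'', CausalModel.intervene]
      have hD : M''.sol () V3.D = c' := by
        rw [CausalModel.sol_eq]
        show M''.sol () V3.C = c'
        exact hC
      rw [CausalModel.sol_eq]
      show (M''.sol () V3.D || !(M''.sol () V3.C)) = true
      rw [hC, hD]; simp
    · -- intervention D ← xs D
      set M' := M3.intervene {V3.D} xs with hM'
      have hC' : M'.sol () V3.C = true := by
        rw [CausalModel.sol_eq]; simp [hM', CausalModel.intervene, M3]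
      have hD' : M'.sol () V3.D = xs V3.D := by
        rw [CausalModel.sol_eq]; simp [hM', CausalModel.intervene]
      have hE' : M'.sol () V3.E = xs V3.D := by
        rw [CausalModel.sol_eq]
        show (M'.sol () V3.D || !(M'.sol () V3.C)) = xs V3.D
        rw [hC', hD']; simp
      have hxD : xs V3.D = true := hE' ▸ h2
      apply h3
      set M'' := M'.intervene {V3.C} (fun _ => c') with hM''
      have hD'' : M''.sol () V3.D = true := by
        rw [CausalModel.sol_eq]
        simp [hM'', hM', CausalModel.intervene, hxD]
      rw [CausalModel.sol_eq]
      show (M''.sol () V3.D || !(M''.sol () V3.C)) = true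
      rw [hD'']; simp
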